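/- If G is a graph such that for every edge e of G the group-choice index of G − e is strictly less than the group-choice index of G, then the minimum degree of the line graph ℓ(G) is at least χ'_{gl}(G) − 1. -/

import Mathlib

open SimpleGraph

/-- A graph `H` is `k`-group choosable if for every (additive) Abelian group `A` of order at
least `k`, every list assignment giving each vertex a `k`-element subset of `A`, and every
"forbidden difference" function `f` on oriented edges (encoded as an antisymmetric function
on ordered pairs of vertices, which is equivalent to fixing an orientation), there is a list
coloring `c` with `c x - c y ≠ f x y` for every edge `xy`. -/
def GroupChoosable {W : Type} (H : SimpleGraph W) (k : ℕ) : Prop :=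
  ∀ (A : Type) [AddCommGroup A] [Fintype A], k ≤ Fintype.card A →
    ∀ L : W → Finset A, (∀ v, (L v).card = k) →
      ∀ f : W → W → A, (∀ x y, f x y = - f y x) →
        ∃ c : W → A, (∀ v, c v ∈ L v) ∧ ∀ ⦃x y⦄, H.Adj x y → c x - c y ≠ f x y

/-- The group choice number of a graph: the least `k` such that it is `k`-group choosable. -/
noncomputable def groupChoiceNumber {W : Type} (H : SimpleGraph W) : ℕ :=
  sInf {k | GroupChoosable H k}

/-- `G` is edge-`k`-group choosable if its line graph is `k`-group choosable. -/
def EdgeGroupChoosable {V : Type} (G : SimpleGraph V) (k : ℕ) : Prop :=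
  GroupChoosable G.lineGraph k

/-- The group-choice index of `G`: the group choice number of its line graph. -/
noncomputable def groupChoiceIndex {V : Type} (G : SimpleGraph V) : ℕ :=
  groupChoiceNumber G.lineGraph

noncomputable instance {V : Type} {G : SimpleGraph V} : DecidableRel G.lineGraph.Adj :=
  Classical.decRel _

/-!
A vertex `v` of degree less than `k` never obstructs `k`-group choosability: colour `H - v`
first; each neighbour `w` of `v` then forbids exactly one colour at `v`, namely
`f v w + c w` (antisymmetry of `f` makes both orientations of `vw` forbid the same colour),
so fewer than `k` colours of the list at `v` are forbidden. Applied to the vertex `e` of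
`ℓ(G)`, whose deletion leaves a subgraph of `ℓ(G - e)`, this shows that
`deg e < χ'_{gl}(G) - 1` would make `G` edge-`(χ'_{gl}(G) - 1)`-group choosable, against
minimality.
-/

namespace GroupChoosable

variable {W : Type} {H : SimpleGraph W} {k : ℕ}

theorem mono {k' : ℕ} (hk : GroupChoosable H k) (hle : k ≤ k') : GroupChoosable H k' := by
  intro A _ _ hA L hL f hf
  choose L' hL'L hL' using fun v => Finset.exists_subset_card_eq (hle.trans (hL v).ge)
  obtain ⟨c, hcL, hc⟩ := hk A (hle.trans hA) L' hL' f hf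
  exact ⟨c, fun v => hL'L v (hcL v), hc⟩

theorem of_hom_injective {W' : Type} {H' : SimpleGraph W'} (φ : H' →g H)
    (hφ : Function.Injective φ) (hk : GroupChoosable H k) : GroupChoosable H' k := by
  intro A _ _ hA L hL f hf
  rcases isEmpty_or_nonempty W' with hW' | hW'
  · exact ⟨isEmptyElim, isEmptyElim, fun x => isEmptyElim x⟩
  have hinv : Function.LeftInverse (Function.invFun φ) φ := Function.leftInverse_invFun hφ
  obtain ⟨c, hcL, hc⟩ := hk A hA (L ∘ Function.invFun φ) (fun v => hL _)
    (fun x y => f (Function.invFun φ x) (Function.invFun φ y)) (fun x y => hf _ _)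
  refine ⟨c ∘ φ, fun v => ?_, fun x y hxy => ?_⟩
  · simpa [hinv v] using hcL (φ v)
  · simpa [hinv x, hinv y] using hc (φ.map_adj hxy)

theorem of_induce_compl_singleton {v : W} [Fintype (H.neighborSet v)]
    (hk : GroupChoosable (H.induce {v}ᶜ) k) (hdeg : H.degree v < k) : GroupChoosable H k := by
  classical
  intro A _ _ hA L hL f hf
  obtain ⟨c, hcL, hc⟩ := hk A hA (fun w => L w) (fun w => hL w) (fun x y => f x y)
    (fun x y => hf x y)
  let c' : W → A := fun w => if hw : w = v then 0 else c ⟨w, hw⟩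
  have hc'L : ∀ w, w ≠ v → c' w ∈ L w := fun w hw => by simpa [c', hw] using hcL ⟨w, hw⟩
  have hc' : ∀ ⦃x y⦄, H.Adj x y → x ≠ v → y ≠ v → c' x - c' y ≠ f x y :=
    fun x y hxy hx hy => by simpa [c', hx, hy] using @hc ⟨x, hx⟩ ⟨y, hy⟩ hxy
  obtain ⟨b, hbL, hb⟩ := Finset.exists_mem_notMem_of_card_lt_card
    (s := (H.neighborFinset v).image fun w => f v w + c' w) (t := L v)
    (by rw [hL]; exact Finset.card_image_le.trans_lt hdeg)
  have hbw : ∀ w, H.Adj v w → b - c' w ≠ f v w := fun w hvw hbw => hb <|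
    Finset.mem_image.2 ⟨w, (H.mem_neighborFinset v w).2 hvw, (sub_eq_iff_eq_add.1 hbw).symm⟩
  refine ⟨Function.update c' v b, fun w => ?_, fun x y hxy => ?_⟩
  · rcases eq_or_ne w v with rfl | hw
    · simpa using hbL
    · simpa [hw] using hc'L w hw
  rcases eq_or_ne x v with rfl | hx
  · simpa [hxy.ne.symm] using hbw y hxy
  rcases eq_or_ne y v with rfl | hy
  · rw [Function.update_self, Function.update_of_ne hx, hf, ← neg_sub, ne_eq, neg_inj]
    exact hbw x hxy.symm
  · simpa [hx, hy] using hc' hxy hx hy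

theorem card [Fintype W] (H : SimpleGraph W) : GroupChoosable H (Fintype.card W) := by
  induction h : Fintype.card W generalizing W with
  | zero =>
    have : IsEmpty W := Fintype.card_eq_zero_iff.1 h
    exact fun _ _ _ _ _ _ _ _ => ⟨isEmptyElim, isEmptyElim, fun x => isEmptyElim x⟩
  | succ n ih =>
    classical
    obtain ⟨v⟩ : Nonempty W := Fintype.card_pos_iff.1 (h ▸ n.succ_pos)
    have hv : Fintype.card ({v}ᶜ : Set W) = n := by
      rw [Fintype.card_compl_set, h]; simp
    exact ((ih (H.induce {v}ᶜ) hv).mono n.le_succ).of_induce_compl_singleton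
      ((H.degree_lt_card_verts v).trans_eq h)

end GroupChoosable

theorem groupChoiceNumber_le {W : Type} {H : SimpleGraph W} {k : ℕ} (hk : GroupChoosable H k) :
    groupChoiceNumber H ≤ k :=
  Nat.sInf_le hk

theorem groupChoosable_groupChoiceNumber {W : Type} [Finite W] (H : SimpleGraph W) :
    GroupChoosable H (groupChoiceNumber H) :=
  have := Fintype.ofFinite W
  Nat.sInf_mem (s := {k | GroupChoosable H k}) ⟨_, GroupChoosable.card H⟩

theorem EdgeGroupChoosable.of_deleteEdges_of_degree_lt {V : Type} {G : SimpleGraph V} {k : ℕ}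
    {e : G.edgeSet} [Fintype (G.lineGraph.neighborSet e)]
    (hk : EdgeGroupChoosable (G.deleteEdges {e.1}) k) (hdeg : G.lineGraph.degree e < k) :
    EdgeGroupChoosable G k := by
  let φ : G.lineGraph.induce {e}ᶜ →g (G.deleteEdges {e.1}).lineGraph :=
    { toFun := fun x => ⟨x.1.1, by
        rw [edgeSet_deleteEdges]; exact ⟨x.1.2, fun h => x.2 (Subtype.ext h)⟩⟩
      map_rel' := fun ⟨hne, hxy⟩ => ⟨fun h => hne (Subtype.ext (Subtype.mk.inj h)), hxy⟩ }
  have hφ : Function.Injective φ := fun x y h =>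
    Subtype.ext <| Subtype.ext <| Subtype.mk.inj h
  exact (hk.of_hom_injective φ hφ).of_induce_compl_singleton hdeg

/-- Lemma 2: if deleting any edge of `G` strictly decreases the group-choice index, then the
minimum degree of the line graph `ℓ(G)` is at least `χ'_{gl}(G) - 1`. -/
theorem stmt {V : Type} [Fintype V] [DecidableEq V] (G : SimpleGraph V) [DecidableRel G.Adj]
    (h : ∀ e ∈ G.edgeSet, groupChoiceIndex (G.deleteEdges {e}) < groupChoiceIndex G) :
    groupChoiceIndex G - 1 ≤ G.lineGraph.minDegree := by
  simp only [groupChoiceIndex] at h ⊢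
  rcases isEmpty_or_nonempty G.edgeSet with hE | hE
  · have : groupChoiceNumber G.lineGraph ≤ 0 := by
      simpa using groupChoiceNumber_le (GroupChoosable.card G.lineGraph)
    omega
  refine le_minDegree_of_forall_le_degree _ _ fun e => ?_
  by_contra! hdeg
  have hG' : EdgeGroupChoosable (G.deleteEdges {e.1}) (groupChoiceNumber G.lineGraph - 1) :=
    (groupChoosable_groupChoiceNumber _).mono (by have := h e e.2; omega)
  have := groupChoiceNumber_le (hG'.of_deleteEdges_of_degree_lt hdeg)
  omega
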